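/- Let λ, μ, γ be real numbers with λ + μ + γ ≠ 0, and let M(λ,μ,γ) be the 3×3 real matrix whose rows are (λ,λ,λ), (μ,μ,μ), (γ,γ,γ). If λμγ ≠ 0, λμ(λ+μ)(λ+μ+γ) > 0 and γ(λ+μ) > 0, then the evolution algebra E_{M(λ,μ,γ)} is isomorphic to the evolution algebra E₇ whose structure matrix has rows (1,0,0), (1,0,0), (1,0,0). -/
import Mathlib

/-- Evolution algebra multiplication on ℝ³ determined by a structure matrix `A`:
`(x ∗_A y) j = ∑ i, x i * y i * A i j`. -/
def evolMul (A : Matrix (Fin 3) (Fin 3) ℝ) (x y : Fin 3 → ℝ) : Fin 3 → ℝ :=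
  fun j => ∑ i, x i * y i * A i j

/-- The evolution algebras with structure matrices `A` and `B` are isomorphic:
there is an ℝ-linear equivalence of ℝ³ intertwining the two multiplications. -/
def EvolIso (A B : Matrix (Fin 3) (Fin 3) ℝ) : Prop :=
  ∃ f : (Fin 3 → ℝ) ≃ₗ[ℝ] (Fin 3 → ℝ),
    ∀ x y, f (evolMul A x y) = evolMul B (f x) (f y)

set_option maxHeartbeats 1000000 in
theorem stmt (l m g : ℝ) (hsum : l + m + g ≠ 0)
    (h1 : l * m * g ≠ 0) (h2 : l * m * (l + m) * (l + m + g) > 0)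
    (h3 : g * (l + m) > 0) :
    EvolIso (!![l, l, l; m, m, m; g, g, g] : Matrix (Fin 3) (Fin 3) ℝ) (!![1, 0, 0; 1, 0, 0; 1, 0, 0] : Matrix (Fin 3) (Fin 3) ℝ) := by
  have hg : g ≠ 0 := by intro h; apply h1; rw [h]; ring
  have hg2 : 0 < g * g := mul_self_pos.mpr hg
  have hs2 : 0 < (l + m + g) * (l + m + g) := mul_self_pos.mpr hsum
  have hslm : 0 < (l + m + g) * (l + m) := by nlinarith [sq_nonneg (l + m)]
  have hlm : 0 < l * m := by nlinarith
  have hsl : 0 < (l + m + g) * l := by nlinarith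
  have hsm : 0 < (l + m + g) * m := by nlinarith
  have hsg : 0 < (l + m + g) * g := by nlinarith
  obtain ⟨p, d, ti, pi, di, hp2, hd2, hti2, hpi, hdi, hpi2, hdi2⟩ :
      ∃ p d ti pi di : ℝ,
        p ^ 2 = (l + m + g) ^ 2 * (l * m) ∧
        d ^ 2 = (l + m + g) * g ∧
        (l + m + g) * (l + m) * ti ^ 2 = 1 ∧
        p * pi = 1 ∧ d * di = 1 ∧
        (l + m + g) ^ 2 * (l * m) * pi ^ 2 = 1 ∧
        (l + m + g) * g * di ^ 2 = 1 := by
    have e1 : Real.sqrt ((l + m + g) * l) ≠ 0 := (Real.sqrt_pos.mpr hsl).ne'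
    have e2 : Real.sqrt ((l + m + g) * m) ≠ 0 := (Real.sqrt_pos.mpr hsm).ne'
    have e3 : Real.sqrt ((l + m + g) * g) ≠ 0 := (Real.sqrt_pos.mpr hsg).ne'
    have e4 : Real.sqrt ((l + m + g) * (l + m)) ≠ 0 := (Real.sqrt_pos.mpr hslm).ne'
    have q1 := Real.sq_sqrt hsl.le
    have q2 := Real.sq_sqrt hsm.le
    have q3 := Real.sq_sqrt hsg.le
    have q4 := Real.sq_sqrt hslm.le
    refine ⟨Real.sqrt ((l + m + g) * l) * Real.sqrt ((l + m + g) * m),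
      Real.sqrt ((l + m + g) * g), (Real.sqrt ((l + m + g) * (l + m)))⁻¹,
      (Real.sqrt ((l + m + g) * l) * Real.sqrt ((l + m + g) * m))⁻¹,
      (Real.sqrt ((l + m + g) * g))⁻¹, ?_, ?_, ?_, ?_, ?_, ?_, ?_⟩
    · rw [mul_pow, q1, q2]; ring
    · exact q3
    · have key : Real.sqrt ((l + m + g) * (l + m)) ^ 2
          * ((Real.sqrt ((l + m + g) * (l + m)))⁻¹) ^ 2 = 1 := by
        rw [← mul_pow, mul_inv_cancel₀ e4, one_pow]
      rw [q4] at key; exact key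
    · exact mul_inv_cancel₀ (mul_ne_zero e1 e2)
    · exact mul_inv_cancel₀ e3
    · have key : (Real.sqrt ((l + m + g) * l) * Real.sqrt ((l + m + g) * m)) ^ 2
          * ((Real.sqrt ((l + m + g) * l) * Real.sqrt ((l + m + g) * m))⁻¹) ^ 2 = 1 := by
        rw [← mul_pow, mul_inv_cancel₀ (mul_ne_zero e1 e2), one_pow]
      have hq : (Real.sqrt ((l + m + g) * l) * Real.sqrt ((l + m + g) * m)) ^ 2
          = (l + m + g) ^ 2 * (l * m) := by rw [mul_pow, q1, q2]; ring
      rw [hq] at key; exact key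
    · have key : Real.sqrt ((l + m + g) * g) ^ 2
          * ((Real.sqrt ((l + m + g) * g))⁻¹) ^ 2 = 1 := by
        rw [← mul_pow, mul_inv_cancel₀ e3, one_pow]
      rw [q3] at key; exact key
  set F : Matrix (Fin 3) (Fin 3) ℝ :=
    !![l, m, g;
       -(p * ti), p * ti, 0;
       -(l * d * ti), -(m * d * ti), (l + m) * d * ti] with hF
  set G : Matrix (Fin 3) (Fin 3) ℝ :=
    !![(l + m) * ti ^ 2, -((l + m + g) * m * pi * ti), -(g * di * ti);
       (l + m) * ti ^ 2, (l + m + g) * l * pi * ti, -(g * di * ti);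
       (l + m) * ti ^ 2, 0, (l + m) * di * ti] with hG
  have hFG : F * G = 1 := by
    rw [hF, hG]
    ext i j
    fin_cases i <;> fin_cases j <;>
      simp [Matrix.mul_apply, Fin.sum_univ_three, Matrix.one_apply]

    · linear_combination (1) * hti2
    · ring
    · ring
    · linear_combination (1*pi*p) * hti2 +
      (1) * hpi
    · ring
    · ring
    · linear_combination (1*di*d) * hti2 +
      (1) * hdi
  have hGF : G * F = 1 := by
    rw [hF, hG]
    ext i j
    fin_cases i <;> fin_cases j <;>
      simp [Matrix.mul_apply, Fin.sum_univ_three, Matrix.one_apply]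

    · linear_combination (1*pi*p) * hti2 +
      (1 + (-1)*ti^2*l^2 + (-1)*ti^2*m*l + (-1)*ti^2*g*l) * hpi +
      (1*ti^2*g*l) * hdi
    · linear_combination (1*di*d + (-1)*pi*p) * hti2 +
      ((-1) + 1*ti^2*l^2 + 1*ti^2*m*l + 1*ti^2*g*l) * hpi +
      (1 + (-1)*ti^2*l^2 + (-2)*ti^2*m*l + (-1)*ti^2*m^2 + (-1)*ti^2*g*l) * hdi
    · linear_combination (1 + (-1)*di*d) * hti2 +
      ((-1) + 1*ti^2*l^2 + 2*ti^2*m*l + 1*ti^2*m^2) * hdi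
    · linear_combination ((-1)*ti^2*l^2 + (-1)*ti^2*m*l + (-1)*ti^2*g*l) * hpi +
      (1*ti^2*g*l) * hdi
    · linear_combination (1*di*d) * hti2 +
      (1*ti^2*l^2 + 1*ti^2*m*l + 1*ti^2*g*l) * hpi +
      (1 + (-1)*ti^2*l^2 + (-2)*ti^2*m*l + (-1)*ti^2*m^2 + (-1)*ti^2*g*l) * hdi
    · linear_combination (1 + (-1)*di*d) * hti2 +
      ((-1) + 1*ti^2*l^2 + 2*ti^2*m*l + 1*ti^2*m^2) * hdi
    · linear_combination ((-1)*ti^2*l^2 + (-1)*ti^2*m*l) * hdi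
    · linear_combination ((-1)*ti^2*m*l + (-1)*ti^2*m^2) * hdi
    · linear_combination (1) * hti2 +
      (1*ti^2*l^2 + 2*ti^2*m*l + 1*ti^2*m^2) * hdi
  refine ⟨LinearEquiv.ofLinear F.mulVecLin G.mulVecLin ?_ ?_, ?_⟩
  · rw [← Matrix.mulVecLin_mul, hFG, Matrix.mulVecLin_one]
  · rw [← Matrix.mulVecLin_mul, hGF, Matrix.mulVecLin_one]
  intro x y
  show F.mulVecLin (evolMul _ x y) = evolMul _ (F.mulVecLin x) (F.mulVecLin y)
  funext j
  fin_cases j <;>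
    simp [evolMul, Matrix.mulVecLin_apply, Matrix.mulVec, dotProduct,
      Fin.sum_univ_three, hF]
  · linear_combination ((-1)*ti^2*(x 1)*(y 1) + 1*ti^2*(x 1)*(y 0) + 1*ti^2*(x 0)*(y 1) + (-1)*ti^2*(x 0)*(y 0)) * hp2 +
      ((-1)*ti^2*l^2*(x 2)*(y 2) + 1*ti^2*l^2*(x 2)*(y 0) + 1*ti^2*l^2*(x 0)*(y 2) + (-1)*ti^2*l^2*(x 0)*(y 0) + (-2)*ti^2*m*l*(x 2)*(y 2) + 1*ti^2*m*l*(x 2)*(y 1) + 1*ti^2*m*l*(x 2)*(y 0) + 1*ti^2*m*l*(x 1)*(y 2) + (-1)*ti^2*m*l*(x 1)*(y 0) + 1*ti^2*m*l*(x 0)*(y 2) + (-1)*ti^2*m*l*(x 0)*(y 1) + (-1)*ti^2*m^2*(x 2)*(y 2) + 1*ti^2*m^2*(x 2)*(y 1) + 1*ti^2*m^2*(x 1)*(y 2) + (-1)*ti^2*m^2*(x 1)*(y 1)) * hd2 +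
      ((-1)*m*l*(x 1)*(y 1) + 1*m*l*(x 1)*(y 0) + 1*m*l*(x 0)*(y 1) + (-1)*m*l*(x 0)*(y 0) + (-1)*g*l*(x 2)*(y 2) + 1*g*l*(x 2)*(y 0) + 1*g*l*(x 0)*(y 2) + (-1)*g*l*(x 0)*(y 0) + (-1)*g*m*(x 2)*(y 2) + 1*g*m*(x 2)*(y 1) + 1*g*m*(x 1)*(y 2) + (-1)*g*m*(x 1)*(y 1)) * hti2
  · ring
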